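/- arXiv:2405.08364 — 12 statements merged into one kernel-verified Lean document; each statement's English description precedes it below -/
import Mathlib

section
/- Every brachymorphism f : R → S satisfies f(n·x) = n·f(x) for all x ∈ R and all integers n. In particular f(-x) = -f(x). -/
/-- A brachymorphism between unital rings: `f (1 + x) = 1 + f x` and `f (x * y) = f x * f y`. -/
def IsBrachy {R S : Type*} [Ring R] [Ring S] (f : R → S) : Prop :=
  (∀ x : R, f (1 + x) = 1 + f x) ∧ (∀ x y : R, f (x * y) = f x * f y)

/-- An element `a` of `R` is addable if every brachymorphism from `R` to any ring
satisfies `f (a + x) = f a + f x`. -/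
def Addable {R : Type*} [Ring R] (a : R) : Prop :=
  ∀ (S : Type) (_ : Ring S) (f : R → S), IsBrachy f → ∀ x : R, f (a + x) = f a + f x

theorem stmt_1 {R S : Type*} [Ring R] [Ring S] (f : R → S) (hf : IsBrachy f) :
    (∀ (n : ℤ) (x : R), f (n • x) = n • f x) ∧ (∀ x : R, f (-x) = -f x) := by
  obtain ⟨h1, hm⟩ := hf
  have h10 : f 1 = 1 + f 0 := by simpa using h1 0
  have h0sq : f 0 = f 0 * f 0 := by simpa using hm 0 0
  have h0 : f 0 = 0 := by
    have h := hm 1 0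
    rw [one_mul, h10, add_mul, one_mul, ← h0sq] at h
    have h' : f 0 + 0 = f 0 + f 0 := by simpa using h
    exact (add_left_cancel h').symm
  have h1' : f 1 = 1 := by rw [h10, h0, add_zero]
  have hneg1 : f (-1) = -1 := by
    have h := h1 (-1)
    rw [add_neg_cancel, h0] at h
    have : 1 + f (-1) = 0 := h.symm
    have := neg_eq_of_add_eq_zero_right this
    rw [← this]
  have hneg : ∀ x : R, f (-x) = -f x := by
    intro x
    have h := hm (-1) x
    rw [neg_one_mul, hneg1, neg_one_mul] at h
    exact h
  have hnat : ∀ n : ℕ, f (n : R) = (n : S) := by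
    intro n
    induction n with
    | zero => simpa using h0
    | succ k ih =>
      have h := h1 (k : R)
      push_cast
      rw [add_comm ((k:S)) 1, ← ih, ← h]
      norm_num [add_comm]
  have hint : ∀ n : ℤ, f (n : R) = (n : S) := by
    intro n
    cases n with
    | ofNat m => simpa using hnat m
    | negSucc m =>
      have : ((Int.negSucc m : ℤ) : R) = -((m + 1 : ℕ) : R) := by
        push_cast [Int.negSucc_eq]; ring_nf
      rw [this, hneg, hnat]
      push_cast [Int.negSucc_eq]
      ring_nf
  constructor
  · intro n x
    rw [zsmul_eq_mul, hm, hint, ← zsmul_eq_mul]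
  · exact hneg
end

section
/- If R is a division ring and S is a unital ring, then every brachymorphism f : R → S is additive, i.e., f(x+y) = f(x) + f(y) for all x, y ∈ R. -/
theorem stmt_2 {R S : Type*} [DivisionRing R] [Ring S] (f : R → S) (hf : IsBrachy f) :
    ∀ x y : R, f (x + y) = f x + f y := by
  obtain ⟨h1, hm⟩ := hf
  have hf1 : f 1 = 1 + f 0 := by simpa using h1 0
  have h0sq : f 0 * f 0 = f 0 := by rw [← hm, mul_zero]
  have h0 : f 0 = 0 := by
    have := hm 0 1
    rw [mul_one, hf1, mul_add, mul_one, h0sq] at this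
    exact (left_eq_add.mp this)
  intro x y
  rcases eq_or_ne x 0 with rfl | hx
  · rw [zero_add, h0, zero_add]
  · have hxy : x + y = x * (1 + x⁻¹ * y) := by
      rw [mul_add, mul_one, ← mul_assoc, mul_inv_cancel₀ hx, one_mul]
    have hinv : f x * f x⁻¹ = 1 := by
      rw [← hm, mul_inv_cancel₀ hx, hf1, h0, add_zero]
    rw [hxy, hm, h1, mul_add, mul_one, hm, ← mul_assoc, hinv, one_mul]
end

section
/- For any ring R, the set Add(R) of addable elements of R is an additive subgroup of R. -/
lemma brachy_zero {R S : Type*} [Ring R] [Ring S] {f : R → S} (hf : IsBrachy f) :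
    f 0 = 0 := by
  have h1 : f 1 = 1 + f 0 := by
    have := hf.1 0
    simpa using this
  have h2 : f 0 = f 0 + f 0 := by
    calc f 0 = f (0 * 1) := by rw [zero_mul]
    _ = f 0 * f 1 := hf.2 0 1
    _ = f 0 * (1 + f 0) := by rw [h1]
    _ = f 0 + f 0 * f 0 := by rw [mul_add, mul_one]
    _ = f 0 + f (0 * 0) := by rw [hf.2 0 0]
    _ = f 0 + f 0 := by rw [zero_mul]
  exact (left_eq_add.mp h2)

lemma addable_zero {R : Type*} [Ring R] : Addable (0 : R) := by
  intro S _ f hf x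
  rw [zero_add, brachy_zero hf, zero_add]

lemma addable_add {R : Type*} [Ring R] {a b : R} (ha : Addable a) (hb : Addable b) :
    Addable (a + b) := by
  intro S iS f hf x
  have hab : f (a + b) = f a + f b := by
    have := ha S iS f hf b
    simpa using this
  calc f (a + b + x) = f (a + (b + x)) := by rw [add_assoc]
    _ = f a + f (b + x) := ha S iS f hf _
    _ = f a + (f b + f x) := by rw [hb S iS f hf x]
    _ = f (a + b) + f x := by rw [hab, add_assoc]

lemma addable_neg {R : Type*} [Ring R] {a : R} (ha : Addable a) : Addable (-a) := by
  intro S iS f hf x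
  have key : ∀ y : R, f (-a + y) = -f a + f y := by
    intro y
    have h := ha S iS f hf (-a + y)
    rw [add_neg_cancel_left] at h
    rw [h, neg_add_cancel_left]
  have hna : f (-a) = -f a := by
    have := key 0
    simpa [brachy_zero hf] using this
  rw [key x, hna]

theorem stmt_3 {R : Type*} [Ring R] :
    ∃ G : AddSubgroup R, (G : Set R) = {a : R | Addable a} := by
  exact ⟨{ carrier := {a : R | Addable a},
           zero_mem' := addable_zero,
           add_mem' := fun ha hb => addable_add ha hb,
           neg_mem' := fun ha => addable_neg ha }, rfl⟩
end

section
/- Let x, y be elements of a ring R. If x + y is addable in R, then the pair (x, y) is summable, i.e., every brachymorphism f with domain R satisfies f(x+y) = f(x) + f(y). -/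
theorem stmt_4 {R : Type*} [Ring R] (x y : R) (h : Addable (x + y)) :
    ∀ (S : Type) (_ : Ring S) (f : R → S), IsBrachy f → f (x + y) = f x + f y := by
  intro S _ f hf
  obtain ⟨h1, hm⟩ := hf
  have key : f ((1 + x) * (1 + y)) = (1 + f x) * (1 + f y) := by
    rw [hm, h1, h1]
  have e1 : (1 + x) * (1 + y) = 1 + (x + y + x * y) := by noncomm_ring
  have e2 : f (1 + (x + y + x * y)) = 1 + (f (x + y) + f x * f y) := by
    rw [h1, h S _ f ⟨h1, hm⟩ (x * y), hm]
  rw [e1, e2] at key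
  have : f (x + y) + f x * f y = f x + f y + f x * f y := by
    apply add_left_cancel (a := (1 : S))
    rw [key]; noncomm_ring
  have := add_right_cancel this
  exact this
end

section
/- Let x, y, u, v be elements of a ring R with u = u·v·u. If the pair (x, y·v) is summable, then the pair (x·u, y) is summable. -/
theorem stmt_5 {R : Type*} [Ring R] (x y u v : R) (hu : u = u * v * u)
    (h : ∀ (S : Type) (_ : Ring S) (f : R → S), IsBrachy f → f (x + y * v) = f x + f (y * v)) :
    ∀ (S : Type) (_ : Ring S) (f : R → S), IsBrachy f → f (x * u + y) = f (x * u) + f y := by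
  intro S _ f hf
  obtain ⟨h1, h2⟩ := hf
  have hxy : f (x + y * v) = f x + f (y * v) := h S _ f ⟨h1, h2⟩
  -- free summability: f (a + a*b) = f a + f (a*b)
  have key : ∀ a b : R, f (a + a * b) = f a + f (a * b) := by
    intro a b
    have e1 : a + a * b = a * (1 + b) := by noncomm_ring
    rw [e1, h2, h1, h2]
    noncomm_ring
  -- f (x*u + y*v*u) = f (x*u) + f (y*v*u)
  have fc : f (x * u + y * v * u) = f (x * u) + f (y * v * u) := by
    have e1 : x * u + y * v * u = (x + y * v) * u := by noncomm_ring
    rw [e1, h2, hxy, add_mul, ← h2, ← h2]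
  set d := y - y * (v * u) with hd
  have mul2 : ∀ a b : R, f (1 + (a + b + a * b)) = 1 + (f a + f b + f a * f b) := by
    intro a b
    have e1 : 1 + (a + b + a * b) = (1 + a) * (1 + b) := by noncomm_ring
    rw [e1, h2, h1, h1]
    noncomm_ring
  -- product computation A
  have pA : f (x * u + y + (x * u + y * v * u) * d)
      = f (x * u) + f (y * v * u) + f d + f ((x * u + y * v * u) * d) := by
    have e1 : x * u + y + (x * u + y * v * u) * d
        = x * u + y * v * u + d + (x * u + y * v * u) * d := by
      rw [hd]; noncomm_ring
    have t := mul2 (x * u + y * v * u) d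
    rw [h1, ← h2] at t
    have e2 := add_left_cancel t
    rw [e1, e2, fc]
  -- key identity using u = u*v*u : (x*u + y*v*u) * d = (x*u + y) * (v*(u*d))
  have cd : (x * u + y * v * u) * d = (x * u + y) * (v * (u * d)) := by
    have hvu : (x * u) * (v * (u * d)) = x * (u * d) := by
      calc (x * u) * (v * (u * d)) = x * ((u * v * u) * d) := by noncomm_ring
        _ = x * (u * d) := by rw [← hu]
    calc (x * u + y * v * u) * d = x * (u * d) + y * (v * (u * d)) := by noncomm_ring
      _ = (x * u) * (v * (u * d)) + y * (v * (u * d)) := by rw [hvu]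
      _ = (x * u + y) * (v * (u * d)) := by noncomm_ring
  have kA := key (x * u + y) (v * (u * d))
  rw [← cd] at kA
  have starA : f (x * u + y) = f (x * u) + f (y * v * u) + f d :=
    add_right_cancel (kA.symm.trans pA)
  -- product computation B
  have pB : f (y + (y * v * u) * d)
      = f (y * v * u) + f d + f ((y * v * u) * d) := by
    have e1 : y + (y * v * u) * d = y * v * u + d + (y * v * u) * d := by
      rw [hd]; noncomm_ring
    have t := mul2 (y * v * u) d
    rw [h1, ← h2] at t
    have e2 := add_left_cancel t
    rw [e1, e2]
  have kB := key y (v * (u * d))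
  have cdB : (y * v * u) * d = y * (v * (u * d)) := by noncomm_ring
  rw [← cdB] at kB
  have starB : f y = f (y * v * u) + f d :=
    add_right_cancel (kB.symm.trans pB)
  rw [starA, starB, add_assoc]
end

section
/- Every unit of a ring R is addable. Consequently, if every element of R is a sum of units, then R is addable, i.e., every brachymorphism with domain R is additive. -/
theorem stmt_7 {R : Type*} [Ring R] :
    (∀ a : R, IsUnit a → Addable a) ∧
    ((∀ x : R, ∃ l : List R, (∀ u ∈ l, IsUnit u) ∧ l.sum = x) → ∀ a : R, Addable a) := by
  have key : ∀ a : R, IsUnit a → Addable a := by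
    rintro a ⟨u, rfl⟩ S _ f ⟨h1, hm⟩ x
    have e1 : (↑u : R) + x = ↑u * (1 + ↑u⁻¹ * x) := by
      rw [mul_add, mul_one, ← mul_assoc, Units.mul_inv, one_mul]
    have hf1 : f (↑u : R) * (f ↑u⁻¹ * f x) = f x := by
      rw [← hm, ← hm, ← mul_assoc, Units.mul_inv, one_mul]
    calc f ((↑u : R) + x) = f (↑u * (1 + ↑u⁻¹ * x)) := by rw [← e1]
      _ = f ↑u * (1 + f (↑u⁻¹ * x)) := by rw [hm, h1]
      _ = f ↑u + f ↑u * (f ↑u⁻¹ * f x) := by rw [mul_add, mul_one, hm]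
      _ = f ↑u + f x := by rw [hf1]
  refine ⟨key, ?_⟩
  intro hsum a
  obtain ⟨l, hl, rfl⟩ := hsum a
  clear hsum
  induction l with
  | nil =>
    intro S _ f ⟨h1, hm⟩ x
    have hf0 : f 0 = 0 := by
      have h01 : f (0 : R) = f 0 * f 1 := by rw [← hm, mul_one]
      have hsq : f (0 : R) * f 0 = 0 := by
        have h2 := h01
        rw [show (1 : R) = 1 + 0 from (add_zero 1).symm, h1, mul_add, mul_one] at h2
        exact (left_eq_add.mp h2)
      calc f (0 : R) = f (0 * 0) := by rw [mul_zero]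
        _ = f 0 * f 0 := hm 0 0
        _ = 0 := hsq
    simp [hf0]
  | cons b t ih =>
    intro S _ f hf x
    have hb := key b (hl b (by simp)) S _ f hf
    have ht := ih (fun u hu => hl u (by simp [hu])) S _ f hf
    simp only [List.sum_cons]
    rw [add_assoc, hb, ht x, hb t.sum, add_assoc]
end

section
/- Every element of the Jacobson radical J(R) of a ring R is addable in R. -/
private lemma exists_left_inv {R : Type*} [Ring R] (a : R)
    (ha : a ∈ (⊥ : Ideal R).jacobson) : ∃ z : R, z * (1 + a) = 1 := by
  obtain ⟨z, hz⟩ := Ideal.mem_jacobson_iff.1 ha 1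
  rw [Ideal.mem_bot, mul_one, sub_eq_zero] at hz
  exact ⟨z, by rw [mul_add, mul_one, add_comm]; exact hz⟩

private lemma isUnit_one_add {R : Type*} [Ring R] (a : R)
    (ha : a ∈ (⊥ : Ideal R).jacobson) : IsUnit (1 + a) := by
  obtain ⟨z, hz⟩ := exists_left_inv a ha
  have hz1 : z - 1 ∈ (⊥ : Ideal R).jacobson := by
    have : z - 1 = -(z * a) := by
      have := hz
      rw [mul_add, mul_one] at this
      rw [← this]; noncomm_ring
    rw [this]
    exact neg_mem (Ideal.mul_mem_left _ z ha)
  obtain ⟨w, hw⟩ := exists_left_inv (z - 1) hz1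
  rw [add_sub_cancel] at hw
  have hw' : w = 1 + a := by
    calc w = w * (z * (1 + a)) := by rw [hz, mul_one]
    _ = (w * z) * (1 + a) := by rw [mul_assoc]
    _ = 1 + a := by rw [hw, one_mul]
  exact ⟨⟨1 + a, z, by rw [← hw']; exact hw, hz⟩, rfl⟩

theorem stmt_8 {R : Type*} [Ring R] (a : R) (ha : a ∈ (⊥ : Ideal R).jacobson) :
    Addable a := by
  obtain ⟨u, hu⟩ := isUnit_one_add a ha
  intro S _ f hf x
  obtain ⟨h1, hmul⟩ := hf
  have key : (u : R) * (1 + (↑u⁻¹ : R) * (x - 1)) = a + x := by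
    rw [mul_add, mul_one, ← mul_assoc, u.mul_inv, one_mul, hu]
    noncomm_ring
  have hfx : f (x - 1) = f x - 1 := by
    have : f x = 1 + f (x - 1) := by
      have := h1 (x - 1)
      rwa [add_sub_cancel] at this
    rw [this]; noncomm_ring
  calc f (a + x) = f ((u : R) * (1 + (↑u⁻¹ : R) * (x - 1))) := by rw [key]
    _ = f u * (1 + f ((↑u⁻¹ : R) * (x - 1))) := by rw [hmul, h1]
    _ = f u + f ((u : R) * ((↑u⁻¹ : R) * (x - 1))) := by rw [mul_add, mul_one, ← hmul]
    _ = f u + f (x - 1) := by rw [← mul_assoc, u.mul_inv, one_mul]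
    _ = f a + f x := by rw [hu, h1, hfx]; noncomm_ring
end

section
/- Let x, y, z be elements of a ring R with x·y = 0. If f is a brachymorphism with domain R, then f(x+y) = f(x) + f(y). (Equivalently: if xy = 0 and 1 + z = (1+x)(1+y) then z = x + y, and this first-order condition is preserved by brachymorphisms.) -/
theorem stmt_9 {R S : Type*} [Ring R] [Ring S] (x y : R) (hxy : x * y = 0)
    (f : R → S) (hf : IsBrachy f) : f (x + y) = f x + f y := by
  obtain ⟨h1, hm⟩ := hf
  have e2 : f 0 = f 0 * f 0 := by
    have := hm 0 0; simpa using this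
  have e0 : f 0 = 0 := by
    have h : f 0 = (1 + f 0) * f 0 := by
      have := hm (1 + 0) 0
      rw [h1 0] at this
      simpa using this
    rw [add_mul, one_mul, ← e2] at h
    have : f 0 + f 0 = f 0 + 0 := by rw [add_zero]; exact h.symm
    exact add_left_cancel this
  have key : f (1 + (x + y)) = 1 + f x + f y := by
    have factor : (1 + x) * (1 + y) = 1 + (x + y) := by rw [mul_add, mul_one, add_mul, one_mul, hxy, add_zero, add_assoc]
    have hxy' : f x * f y = 0 := by rw [← hm, hxy, e0]
    calc f (1 + (x + y)) = f ((1 + x) * (1 + y)) := by rw [factor]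
      _ = (1 + f x) * (1 + f y) := by rw [hm, h1, h1]
      _ = 1 + f x + f y + f x * f y := by rw [mul_add, mul_one, add_mul, one_mul, ← add_assoc]
      _ = 1 + f x + f y := by rw [hxy', add_zero]
  have := h1 (x + y)
  rw [this] at key
  have : f (x + y) = f x + f y := by
    have h' : 1 + f (x + y) = 1 + (f x + f y) := by rw [key, add_assoc]
    exact add_left_cancel h'
  exact this
end

section
/- If A and B are rings, (a_1, ..., a_n) is a summable tuple in A and (b_1, ..., b_n) is a summable tuple in B, then the tuple ((a_1, b_1), ..., (a_n, b_n)) is summable in the product ring A × B. In particular, the product of two addable rings is addable. -/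
section Corner

variable {S : Type} [Ring S]

/-- The corner set of an idempotent. -/
def CornerSet (u : S) : Type := {s : S // u * s = s ∧ s * u = s}

namespace CornerSet

variable (u : S) (hu : u * u = u)

instance : Zero (CornerSet u) := ⟨⟨0, by simp⟩⟩
instance : Add (CornerSet u) :=
  ⟨fun a b => ⟨a.1 + b.1, by rw [mul_add, a.2.1, b.2.1], by rw [add_mul, a.2.2, b.2.2]⟩⟩
instance : Neg (CornerSet u) :=
  ⟨fun a => ⟨-a.1, by rw [mul_neg, a.2.1], by rw [neg_mul, a.2.2]⟩⟩
instance : Mul (CornerSet u) :=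
  ⟨fun a b => ⟨a.1 * b.1, by rw [← mul_assoc, a.2.1], by rw [mul_assoc, b.2.2]⟩⟩

/-- The unit of the corner ring. -/
def corOne : One (CornerSet u) := ⟨⟨u, hu, hu⟩⟩

/-- The corner ring structure with unit `u`. -/
def cornerRing : Ring (CornerSet u) :=
  letI := corOne u hu
  Ring.ofMinimalAxioms
    (fun a b c => Subtype.ext (add_assoc a.1 b.1 c.1))
    (fun a => Subtype.ext (zero_add a.1))
    (fun a => Subtype.ext (neg_add_cancel a.1))
    (fun a b c => Subtype.ext (mul_assoc a.1 b.1 c.1))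
    (fun a => Subtype.ext a.2.1)
    (fun a => Subtype.ext a.2.2)
    (fun a b c => Subtype.ext (mul_add a.1 b.1 c.1))
    (fun a b c => Subtype.ext (add_mul a.1 b.1 c.1))

end CornerSet

end Corner

section Lemmas

variable {R S : Type*} [Ring R] [Ring S] {f : R → S}

theorem IsBrachy.map_zero (hf : IsBrachy f) : f 0 = 0 := by
  have h1 : f 1 = 1 + f 0 := by simpa using hf.1 0
  have key : f 0 * f 1 = f 0 := by rw [← hf.2 0 1, zero_mul]
  rw [h1, mul_add, mul_one, ← hf.2 0 0, zero_mul] at key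
  exact add_eq_right.mp key

theorem IsBrachy.map_one (hf : IsBrachy f) : f 1 = 1 := by
  have := hf.1 0
  rw [add_zero, hf.map_zero, add_zero] at this
  exact this

theorem IsBrachy.map_neg (hf : IsBrachy f) (x : R) : f (-x) = - f x := by
  have hm1 : f (-1) = -1 := by
    have h := hf.1 (-1)
    rw [add_neg_cancel, hf.map_zero] at h
    exact (neg_eq_of_add_eq_zero_right h.symm).symm
  rw [← neg_one_mul, hf.2, hm1, neg_one_mul]

end Lemmas

theorem stmt_10 {A B : Type} [Ring A] [Ring B] (n : ℕ) (a : Fin n → A) (b : Fin n → B)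
    (ha : ∀ (S : Type) (_ : Ring S) (f : A → S), IsBrachy f → f (∑ i, a i) = ∑ i, f (a i))
    (hb : ∀ (S : Type) (_ : Ring S) (f : B → S), IsBrachy f → f (∑ i, b i) = ∑ i, f (b i)) :
    ∀ (S : Type) (_ : Ring S) (f : A × B → S), IsBrachy f →
      f (∑ i, (a i, b i)) = ∑ i, f (a i, b i) := by
  intro S _ f hf
  set u : S := f (1, 0) with hu_def
  set v : S := f (0, 1) with hv_def
  have hu : u * u = u := by rw [hu_def, ← hf.2]; norm_num
  have hv : v * v = v := by rw [hv_def, ← hf.2]; norm_num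
  have hneg : f ((-1 : A), (0 : B)) = -u := by
    have h : ((-1 : A), (0 : B)) = (-1 : A × B) * (1, 0) := by simp [Prod.ext_iff]
    rw [h, hf.2, hf.map_neg 1, hf.map_one, neg_one_mul]
  have hv1 : v = 1 - u := by
    have h : ((0 : A), (1 : B)) = (1 : A × B) + ((-1 : A), (0 : B)) := by
      simp [Prod.ext_iff]
    rw [hv_def, h, hf.1, hneg, ← sub_eq_add_neg]
  have huv : u + v = 1 := by rw [hv1]; abel
  have hL : ∀ p : A × B, f p * u = f (p.1, 0) := fun p => by
    rw [hu_def, ← hf.2]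
    congr 1
    simp [Prod.ext_iff]
  have hRv : ∀ p : A × B, f p * v = f (0, p.2) := fun p => by
    rw [hv_def, ← hf.2]
    congr 1
    simp [Prod.ext_iff]
  have split : ∀ p : A × B, f p = f (p.1, 0) + f (0, p.2) := fun p => by
    rw [← hL, ← hRv, ← mul_add, huv, mul_one]
  -- g : A → corner of u
  have hgu : ∀ x : A, u * f (x, 0) = f (x, 0) ∧ f (x, 0) * u = f (x, 0) := fun x => by
    constructor
    · rw [hu_def, ← hf.2]; congr 1; simp [Prod.ext_iff]
    · rw [hu_def, ← hf.2]; congr 1; simp [Prod.ext_iff]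
  have hhv : ∀ y : B, v * f (0, y) = f (0, y) ∧ f (0, y) * v = f (0, y) := fun y => by
    constructor
    · rw [hv_def, ← hf.2]; congr 1; simp [Prod.ext_iff]
    · rw [hv_def, ← hf.2]; congr 1; simp [Prod.ext_iff]
  letI : Ring (CornerSet u) := CornerSet.cornerRing u hu
  letI : Ring (CornerSet v) := CornerSet.cornerRing v hv
  set g : A → CornerSet u := fun x => ⟨f (x, 0), hgu x⟩ with hg_def
  set h : B → CornerSet v := fun y => ⟨f (0, y), hhv y⟩ with hh_def
  have hg : IsBrachy g := by
    constructor
    · intro x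
      apply Subtype.ext
      show f (1 + x, 0) = u + f (x, 0)
      have e : ((1 + x : A), (0 : B)) = ((1 : A × B) + (x, 0)) * (1, 0) := by
        simp [Prod.ext_iff]
      rw [e, hf.2, hf.1, add_mul, one_mul, ← hu_def, (hgu x).2]
    · intro x y
      apply Subtype.ext
      show f (x * y, 0) = f (x, 0) * f (y, 0)
      rw [← hf.2]
      congr 1
      simp [Prod.ext_iff]
  have hh : IsBrachy h := by
    constructor
    · intro y
      apply Subtype.ext
      show f (0, 1 + y) = v + f (0, y)
      have e : ((0 : A), (1 + y : B)) = ((1 : A × B) + (0, y)) * (0, 1) := by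
        simp [Prod.ext_iff]
      rw [e, hf.2, hf.1, add_mul, one_mul, ← hv_def, (hhv y).2]
    · intro x y
      apply Subtype.ext
      show f (0, x * y) = f (0, x) * f (0, y)
      rw [← hf.2]
      congr 1
      simp [Prod.ext_iff]
  have val_sum_u : ∀ (t : Finset (Fin n)) (F : Fin n → CornerSet u),
      (∑ i ∈ t, F i).val = ∑ i ∈ t, (F i).val := by
    intro t F
    induction t using Finset.cons_induction with
    | empty => rfl
    | cons i t hi ih => rw [Finset.sum_cons, Finset.sum_cons, ← ih]; rfl
  have val_sum_v : ∀ (t : Finset (Fin n)) (F : Fin n → CornerSet v),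
      (∑ i ∈ t, F i).val = ∑ i ∈ t, (F i).val := by
    intro t F
    induction t using Finset.cons_induction with
    | empty => rfl
    | cons i t hi ih => rw [Finset.sum_cons, Finset.sum_cons, ← ih]; rfl
  have hga := ha (CornerSet u) _ g hg
  have hhb := hb (CornerSet v) _ h hh
  have hga' : f (∑ i, a i, 0) = ∑ i, f (a i, 0) := by
    have := congrArg Subtype.val hga
    rw [val_sum_u] at this
    exact this
  have hhb' : f (0, ∑ i, b i) = ∑ i, f (0, b i) := by
    have := congrArg Subtype.val hhb
    rw [val_sum_v] at this
    exact this
  have hsum : (∑ i, ((a i, b i) : A × B)) = (∑ i, a i, ∑ i, b i) := by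
    ext <;> simp [Prod.fst_sum, Prod.snd_sum]
  rw [hsum, split (∑ i, a i, ∑ i, b i)]
  simp only
  rw [hga', hhb', ← Finset.sum_add_distrib]
  exact Finset.sum_congr rfl fun i _ => (split (a i, b i)).symm
end

section
/- Let x, y be elements of a ring R with x·y·x = x²·y, and set z = x + y. Then x·z·y = x·y·z, (1+xz)(1+yz) = 1+(1+xy)z², and (1+x(1+z))(1+(1+y)(1+z)) = 1+(1+x(1+y))(1+z)². Conversely, any triple (x,y,z) of elements of a ring satisfying these three equations satisfies z = x + y. -/
private lemma aux1 {R : Type*} [Ring R] (x y : R) (h : x * y * x = x ^ 2 * y) :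
    (1 + x * (x + y)) * (1 + y * (x + y)) = 1 + (1 + x * y) * (x + y) ^ 2 := by
  have h1 : x * (x + y) * y = x * y * (x + y) := by
    calc x * (x + y) * y = x ^ 2 * y + x * y * y := by noncomm_ring
    _ = x * y * x + x * y * y := by rw [← h]
    _ = x * y * (x + y) := by noncomm_ring
  calc (1 + x * (x + y)) * (1 + y * (x + y))
      = 1 + x * (x + y) + y * (x + y) + x * (x + y) * y * (x + y) := by noncomm_ring
    _ = 1 + x * (x + y) + y * (x + y) + x * y * (x + y) * (x + y) := by rw [h1]
    _ = 1 + (1 + x * y) * (x + y) ^ 2 := by noncomm_ring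

private lemma aux2 {R : Type*} [Ring R] (x y z : R) (h1 : x * z * y = x * y * z)
    (h2 : (1 + x * z) * (1 + y * z) = 1 + (1 + x * y) * z ^ 2) :
    x * z + y * z = z * z := by
  have e1 : 1 + (x * z + y * z) + x * y * (z * z) = 1 + z * z + x * y * (z * z) := by
    calc 1 + (x * z + y * z) + x * y * (z * z)
        = 1 + x * z + y * z + x * z * y * z := by rw [h1]; noncomm_ring
      _ = (1 + x * z) * (1 + y * z) := by noncomm_ring
      _ = 1 + (1 + x * y) * z ^ 2 := h2
      _ = 1 + z * z + x * y * (z * z) := by noncomm_ring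
  have e2 : 1 + (x * z + y * z) = 1 + z * z := add_right_cancel e1
  exact add_left_cancel e2

theorem stmt_12 {R : Type*} [Ring R] :
    (∀ x y : R, x * y * x = x ^ 2 * y →
      x * (x + y) * y = x * y * (x + y) ∧
      (1 + x * (x + y)) * (1 + y * (x + y)) = 1 + (1 + x * y) * (x + y) ^ 2 ∧
      (1 + x * (1 + (x + y))) * (1 + (1 + y) * (1 + (x + y)))
        = 1 + (1 + x * (1 + y)) * (1 + (x + y)) ^ 2) ∧
    (∀ x y z : R,
      x * z * y = x * y * z →
      (1 + x * z) * (1 + y * z) = 1 + (1 + x * y) * z ^ 2 →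
      (1 + x * (1 + z)) * (1 + (1 + y) * (1 + z)) = 1 + (1 + x * (1 + y)) * (1 + z) ^ 2 →
      z = x + y) := by
  constructor
  · intro x y h
    refine ⟨?_, aux1 x y h, ?_⟩
    · calc x * (x + y) * y = x ^ 2 * y + x * y * y := by noncomm_ring
      _ = x * y * x + x * y * y := by rw [← h]
      _ = x * y * (x + y) := by noncomm_ring
    · have h' : x * (1 + y) * x = x ^ 2 * (1 + y) := by
        calc x * (1 + y) * x = x ^ 2 + x * y * x := by noncomm_ring
        _ = x ^ 2 + x ^ 2 * y := by rw [h]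
        _ = x ^ 2 * (1 + y) := by noncomm_ring
      have := aux1 x (1 + y) h'
      rw [show (1 : R) + (x + y) = x + (1 + y) from by abel]
      exact this
  · intro x y z h1 h2 h3
    have hA : x * z + y * z = z * z := aux2 x y z h1 h2
    have h1' : x * (1 + z) * (1 + y) = x * (1 + y) * (1 + z) := by
      calc x * (1 + z) * (1 + y) = x + x * y + x * z + x * z * y := by noncomm_ring
      _ = x + x * y + x * z + x * y * z := by rw [h1]
      _ = x * (1 + y) * (1 + z) := by noncomm_ring
    have hA' : x * (1 + z) + (1 + y) * (1 + z) = (1 + z) * (1 + z) :=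
      aux2 x (1 + y) (1 + z) h1' h3
    have e2 : x + y + (x * z + y * z) + (1 + z) = z * z + (1 + z + z) := by
      calc x + y + (x * z + y * z) + (1 + z)
          = x * (1 + z) + (1 + y) * (1 + z) := by noncomm_ring
        _ = (1 + z) * (1 + z) := hA'
        _ = z * z + (1 + z + z) := by noncomm_ring
    rw [hA] at e2
    have e3 : x + y + (z * z + (1 + z)) = z + (z * z + (1 + z)) := by
      calc x + y + (z * z + (1 + z)) = x + y + z * z + (1 + z) := by abel
        _ = z * z + (1 + z + z) := e2
        _ = z + (z * z + (1 + z)) := by abel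
    exact (add_right_cancel e3).symm
end

section
/- Any pair of commuting elements in a ring R is summable: if x·y = y·x, then every brachymorphism f with domain R satisfies f(x+y) = f(x) + f(y). In particular, every central element of R is addable, and every commutative ring is addable. -/
/-- Key step: for commuting `u,v`, `(f u + f v) * f (u+v) = f (u+v) * f (u+v)`,
via Julia Robinson's identity `(u*z+1)*(v*z+1) = (u*v+1)*z^2 + 1` with `z = u+v`. -/
theorem brachy_key {R S : Type*} [Ring R] [Ring S] (f : R → S) (hf : IsBrachy f)
    (u v : R) (huv : u * v = v * u) :
    (f u + f v) * f (u + v) = f (u + v) * f (u + v) := by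
  obtain ⟨h1, hm⟩ := hf
  have hzv : (u + v) * v = v * (u + v) := by
    linear_combination (norm := noncomm_ring) huv
  have hfzv : f (u + v) * f v = f v * f (u + v) := by
    rw [← hm, ← hm, hzv]
  have hring : (1 + u * (u + v)) * (1 + v * (u + v)) =
      1 + (1 + u * v) * ((u + v) * (u + v)) := by
    linear_combination (norm := noncomm_ring) u * hzv * (u + v)
  have E : (1 + f u * f (u + v)) * (1 + f v * f (u + v)) =
      1 + (1 + f u * f v) * (f (u + v) * f (u + v)) := by
    calc (1 + f u * f (u + v)) * (1 + f v * f (u + v))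
        = f (1 + u * (u + v)) * f (1 + v * (u + v)) := by rw [h1, h1, hm, hm]
      _ = f ((1 + u * (u + v)) * (1 + v * (u + v))) := (hm _ _).symm
      _ = f (1 + (1 + u * v) * ((u + v) * (u + v))) := by rw [hring]
      _ = 1 + (1 + f u * f v) * (f (u + v) * f (u + v)) := by rw [h1, hm, h1, hm, hm]
  linear_combination (norm := noncomm_ring) E - f u * hfzv * f (u + v)

theorem brachy_add {R S : Type*} [Ring R] [Ring S] (f : R → S) (hf : IsBrachy f)
    (u v : R) (huv : u * v = v * u) : f (u + v) = f u + f v := by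
  have k1 := brachy_key f hf u v huv
  have huv' : u * (v + 1) = (v + 1) * u := by
    linear_combination (norm := noncomm_ring) huv
  have k2 := brachy_key f hf u (v + 1) huv'
  have e1 : f (v + 1) = 1 + f v := by rw [add_comm v 1]; exact hf.1 v
  have e2 : f (u + (v + 1)) = 1 + f (u + v) := by
    rw [← add_assoc, add_comm (u + v) 1]; exact hf.1 (u + v)
  rw [e1, e2] at k2
  linear_combination (norm := noncomm_ring) k1 - k2

theorem stmt_13 :
    (∀ (R : Type) (_ : Ring R) (x y : R), x * y = y * x →
      ∀ (S : Type) (_ : Ring S) (f : R → S), IsBrachy f → f (x + y) = f x + f y) ∧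
    (∀ (R : Type) (_ : Ring R) (a : R), a ∈ Set.center R → Addable a) ∧
    (∀ (R : Type) (_ : CommRing R) (a : R), Addable a) := by
  refine ⟨?_, ?_, ?_⟩
  · intro R _ x y hxy S _ f hf
    exact brachy_add f hf x y hxy
  · intro R _ a ha S _ f hf x
    exact brachy_add f hf a x (ha.comm x)
  · intro R _ a S _ f hf x
    exact brachy_add f hf a x (mul_comm a x)
end

section
/- A map f : R → S between unital rings is a ring homomorphism if and only if f(1+x) = 1 + f(x) for all x ∈ R, and f(z + x·z·y) = f(z) + f(x)·f(z)·f(y) for all x, y ∈ R and z ∈ {0, 1, x+y}. -/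
theorem stmt_19 {R S : Type*} [Ring R] [Ring S] (f : R → S) :
    ((∀ x : R, f (1 + x) = 1 + f x) ∧
      (∀ x y z : R, z = 0 ∨ z = 1 ∨ z = x + y →
        f (z + x * z * y) = f z + f x * f z * f y)) ↔
    (f 0 = 0 ∧ f 1 = 1 ∧ (∀ x y : R, f (x + y) = f x + f y) ∧
      (∀ x y : R, f (x * y) = f x * f y)) := by
  constructor
  · rintro ⟨h1, h2⟩
    -- f x * f 0 * f y = 0 for all x y
    have h00 : ∀ x y : R, f x * f 0 * f y = 0 := by
      intro x y
      have h := h2 x y 0 (Or.inl rfl)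
      simp only [mul_zero, zero_mul, add_zero, zero_add] at h
      exact (left_eq_add.mp h)
    have hf1 : f 1 = 1 + f 0 := by
      have := h1 0
      simpa using this
    have hx0 : ∀ x : R, f x * f 0 = 0 := by
      intro x
      have h := h00 x 1
      rw [hf1, mul_add, mul_one, h00 x 0, add_zero] at h
      exact h
    have hf0 : f 0 = 0 := by
      have h := h00 1 1
      rw [hf1, add_mul, one_mul, hx0 0, add_zero, mul_add, mul_one, hx0 0,
        add_zero] at h
      exact h
    have hf1' : f 1 = 1 := by rw [hf1, hf0, add_zero]
    -- multiplicativity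
    have hm : ∀ x y : R, f (x * y) = f x * f y := by
      intro x y
      have h := h2 x y 1 (Or.inr (Or.inl rfl))
      rw [mul_one, h1 (x * y), hf1', mul_one] at h
      exact add_left_cancel h
    -- key: f(x+y) * f(x+y) = f(x+y) * (f x + f y)
    have key : ∀ x y : R, f (x + y) * f (x + y) = f (x + y) * (f x + f y) := by
      intro x y
      have hA := h2 x y (x + y) (Or.inr (Or.inr rfl))
      have hE : (1 + (x + y) * (x + y + x * (x + y) * y))
          = (1 + (x + y) * x) * (1 + (x + y) * y) := by noncomm_ring
      have hq : f (1 + (x + y) * (x + y + x * (x + y) * y))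
          = f ((1 + (x + y) * x) * (1 + (x + y) * y)) := by rw [hE]
      rw [h1, hm, hA, hm, h1, h1, hm, hm] at hq
      -- hq : 1 + f(x+y) * (f(x+y) + fx * f(x+y) * fy)
      --    = (1 + f(x+y)*fx) * (1 + f(x+y)*fy)
      set a := f (x + y)
      have hq2 : 1 + (a * a + a * (f x * a * f y))
          = 1 + (a * f x + (a * f y + a * f x * (a * f y))) := by
        rw [mul_add] at hq
        rw [hq]; noncomm_ring
      have hq3 := add_left_cancel hq2
      have : a * (f x * a * f y) = a * f x * (a * f y) := by noncomm_ring
      rw [this] at hq3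
      rw [mul_add]
      have hq4 : a * a + a * f x * (a * f y)
          = (a * f x + a * f y) + a * f x * (a * f y) := by
        rw [hq3]; abel
      have := add_right_cancel hq4
      rw [this]
    -- additivity
    have hadd : ∀ x y : R, f (x + y) = f x + f y := by
      intro x y
      have h3 := key (1 + x) y
      rw [add_assoc, h1 (x + y), h1 x] at h3
      set a := f (x + y)
      set b := f x + f y with hb
      have h3' : (1 + a) * (1 + a) = (1 + a) * (1 + b) := by
        rw [h3]; rw [hb]; noncomm_ring
      rw [mul_add, mul_add, mul_one] at h3'
      have h6 := add_left_cancel h3'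
      rw [add_mul, add_mul, one_mul, one_mul, key x y] at h6
      exact add_right_cancel h6
    exact ⟨hf0, hf1', hadd, hm⟩
  · rintro ⟨h0, h1, hadd, hmul⟩
    constructor
    · intro x; rw [hadd, h1]
    · intro x y z _; rw [hadd, hmul, hmul]
end
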